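/- Let (A, B, C) be a recollement of abelian categories in which i^! is exact. Then for every object Y of B there is a short exact sequence 0 → i_* i^!(Y) → Y → j_* j^*(Y) → 0 in B, where the maps are the counit of (i_*, i^!) and the unit of (j^*, j_*). -/

import Mathlib

open CategoryTheory Limits

universe u₁ u₂ u₃ v₁ v₂ v₃

/-- A recollement of abelian categories `(𝒜, ℬ, 𝒞)`. -/
structure Recollement (𝒜 : Type u₁) (ℬ : Type u₂) (𝒞 : Type u₃)
    [Category.{v₁} 𝒜] [Category.{v₂} ℬ] [Category.{v₃} 𝒞]
    [Abelian 𝒜] [Abelian ℬ] [Abelian 𝒞] where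
  /-- `i^* : ℬ → 𝒜` -/
  iStar : ℬ ⥤ 𝒜
  /-- `i_* : 𝒜 → ℬ` -/
  iIns : 𝒜 ⥤ ℬ
  /-- `i^! : ℬ → 𝒜` -/
  iShriek : ℬ ⥤ 𝒜
  /-- `j_! : 𝒞 → ℬ` -/
  jShriek : 𝒞 ⥤ ℬ
  /-- `j^* : ℬ → 𝒞` -/
  jStar : ℬ ⥤ 𝒞
  /-- `j_* : 𝒞 → ℬ` -/
  jIns : 𝒞 ⥤ ℬ
  iStar_additive : iStar.Additive
  iIns_additive : iIns.Additive
  iShriek_additive : iShriek.Additive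
  jShriek_additive : jShriek.Additive
  jStar_additive : jStar.Additive
  jIns_additive : jIns.Additive
  /-- the adjoint pair `(i^*, i_*)` -/
  adj₁ : iStar ⊣ iIns
  /-- the adjoint pair `(i_*, i^!)` -/
  adj₂ : iIns ⊣ iShriek
  /-- the adjoint pair `(j_!, j^*)` -/
  adj₃ : jShriek ⊣ jStar
  /-- the adjoint pair `(j^*, j_*)` -/
  adj₄ : jStar ⊣ jIns
  iIns_full : iIns.Full
  iIns_faithful : iIns.Faithful
  jShriek_full : jShriek.Full
  jShriek_faithful : jShriek.Faithful
  jIns_full : jIns.Full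
  jIns_faithful : jIns.Faithful
  /-- `Im i_* = Ker j^*` -/
  essImage_iIns_eq_ker_jStar : ∀ b : ℬ, iIns.essImage b ↔ IsZero (jStar.obj b)

/-!
The functors `j^*` and `i^!` jointly reflect zero objects: if `j^* Y = 0` then `Y ≅ i_* a`, and
`i^! i_* a ≅ a` because `i_*` is fully faithful. Since `j^*` is exact and `i^!` is right exact by
assumption (and left exact as a right adjoint), the pair therefore jointly reflects monomorphisms,
epimorphisms and exactness. Applying `j^*` to `i_* i^! Y → Y → j_* j^* Y` gives
`0 → j^* Y ≅ j^* j_* j^* Y`, and applying `i^!` gives `i^! i_* i^! Y ≅ i^! Y → 0`, because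
`j^* i_* = 0` and hence `i^! j_* = 0` by adjunction; both are short exact.
-/

namespace Recollement

attribute [instance] iIns_full iIns_faithful jIns_full jIns_faithful

variable {𝒜 : Type u₁} {ℬ : Type u₂} {𝒞 : Type u₃}
  [Category.{v₁} 𝒜] [Category.{v₂} ℬ] [Category.{v₃} 𝒞]
  [Abelian 𝒜] [Abelian ℬ] [Abelian 𝒞] (R : Recollement 𝒜 ℬ 𝒞)

instance : R.jStar.IsLeftAdjoint := R.adj₄.isLeftAdjoint

instance : R.jStar.IsRightAdjoint := R.adj₃.isRightAdjoint

instance : R.iShriek.IsRightAdjoint := R.adj₂.isRightAdjoint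

lemma isZero_jStar_obj_iIns_obj (a : 𝒜) : IsZero (R.jStar.obj (R.iIns.obj a)) :=
  (R.essImage_iIns_eq_ker_jStar _).mp (R.iIns.obj_mem_essImage a)

lemma eq_zero_of_iIns_obj_to_jIns_obj {a : 𝒜} {c : 𝒞} (f : R.iIns.obj a ⟶ R.jIns.obj c) :
    f = 0 :=
  (R.adj₄.homEquiv _ _).symm.injective ((R.isZero_jStar_obj_iIns_obj a).eq_of_src _ _)

lemma isZero_iShriek_obj_jIns_obj (c : 𝒞) : IsZero (R.iShriek.obj (R.jIns.obj c)) := by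
  rw [IsZero.iff_id_eq_zero]
  exact (R.adj₂.homEquiv _ _).symm.injective
    ((R.eq_zero_of_iIns_obj_to_jIns_obj _).trans (R.eq_zero_of_iIns_obj_to_jIns_obj _).symm)

lemma isZero_of_isZero_jStar_obj_of_isZero_iShriek_obj {b : ℬ} (hj : IsZero (R.jStar.obj b))
    (hs : IsZero (R.iShriek.obj b)) : IsZero b := by
  obtain ⟨a, ⟨e⟩⟩ := (R.essImage_iIns_eq_ker_jStar b).mpr hj
  have ha : IsZero a := hs.of_iso (asIso (R.adj₂.unit.app a) ≪≫ R.iShriek.mapIso e)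
  exact (R.iIns.map_isZero ha).of_iso e.symm

lemma mono_of_mono_jStar_map_of_mono_iShriek_map {b b' : ℬ} (φ : b ⟶ b')
    [Mono (R.jStar.map φ)] [Mono (R.iShriek.map φ)] : Mono φ := by
  refine Abelian.mono_of_kernel_ι_eq_zero φ (IsZero.eq_of_src ?_ _ _)
  exact R.isZero_of_isZero_jStar_obj_of_isZero_iShriek_obj
    ((isZero_kernel_of_mono _).of_iso (PreservesKernel.iso R.jStar φ))
    ((isZero_kernel_of_mono _).of_iso (PreservesKernel.iso R.iShriek φ))

variable [PreservesFiniteColimits R.iShriek]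

lemma epi_of_epi_jStar_map_of_epi_iShriek_map {b b' : ℬ} (φ : b ⟶ b')
    [Epi (R.jStar.map φ)] [Epi (R.iShriek.map φ)] : Epi φ := by
  refine Abelian.epi_of_cokernel_π_eq_zero φ (IsZero.eq_of_tgt ?_ _ _)
  exact R.isZero_of_isZero_jStar_obj_of_isZero_iShriek_obj
    ((isZero_cokernel_of_epi _).of_iso (PreservesCokernel.iso R.jStar φ))
    ((isZero_cokernel_of_epi _).of_iso (PreservesCokernel.iso R.iShriek φ))

lemma exact_of_exact_map_jStar_of_exact_map_iShriek {S : ShortComplex ℬ}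
    (hj : (S.map R.jStar).Exact) (hs : (S.map R.iShriek).Exact) : S.Exact := by
  rw [ShortComplex.exact_iff_isZero_homology] at hj hs ⊢
  exact R.isZero_of_isZero_jStar_obj_of_isZero_iShriek_obj
    (hj.of_iso (S.mapHomologyIso R.jStar).symm) (hs.of_iso (S.mapHomologyIso R.iShriek).symm)

end Recollement

theorem stmt9_general (𝒜 : Type u₁) (ℬ : Type u₂) (𝒞 : Type u₃)
    [Category.{v₁} 𝒜] [Category.{v₂} ℬ] [Category.{v₃} 𝒞]
    [Abelian 𝒜] [Abelian ℬ] [Abelian 𝒞] (R : Recollement 𝒜 ℬ 𝒞)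
    (h₂ : PreservesFiniteColimits R.iShriek) :
    ∀ Y : ℬ, ∃ w : R.adj₂.counit.app Y ≫ R.adj₄.unit.app Y = 0,
      (ShortComplex.mk (R.adj₂.counit.app Y) (R.adj₄.unit.app Y) w).ShortExact := by
  intro Y
  refine ⟨R.eq_zero_of_iIns_obj_to_jIns_obj _, ?_⟩
  have hj := R.isZero_jStar_obj_iIns_obj (R.iShriek.obj Y)
  have hs := R.isZero_iShriek_obj_jIns_obj (R.jStar.obj Y)
  have : Mono (R.jStar.map (R.adj₂.counit.app Y)) := mono_of_source_iso_zero _ hj.isoZero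
  have : Epi (R.iShriek.map (R.adj₄.unit.app Y)) := epi_of_target_iso_zero _ hs.isoZero
  refine
    { exact := R.exact_of_exact_map_jStar_of_exact_map_iShriek ?_ ?_
      mono_f := R.mono_of_mono_jStar_map_of_mono_iShriek_map _
      epi_g := R.epi_of_epi_jStar_map_of_epi_iShriek_map _ }
  · exact (ShortComplex.exact_iff_mono _ (hj.eq_of_src _ _)).2
      (inferInstanceAs (Mono (R.jStar.map (R.adj₄.unit.app Y))))
  · exact (ShortComplex.exact_iff_epi _ (hs.eq_of_tgt _ _)).2
      (inferInstanceAs (Epi (R.iShriek.map (R.adj₂.counit.app Y))))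

/-- In a recollement `(𝒜, ℬ, 𝒞)` with `i^!` exact, every object `Y` of `ℬ`
fits in a short exact sequence `0 → i_* i^!(Y) → Y → j_* j^*(Y) → 0` given by
the counit of `(i_*, i^!)` and the unit of `(j^*, j_*)`. -/
theorem stmt9 (𝒜 : Type u₁) (ℬ : Type u₂) (𝒞 : Type u₃)
    [Category.{v₁} 𝒜] [Category.{v₂} ℬ] [Category.{v₃} 𝒞]
    [Abelian 𝒜] [Abelian ℬ] [Abelian 𝒞] (R : Recollement 𝒜 ℬ 𝒞)
    (h₁ : PreservesFiniteLimits R.iShriek)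
    (h₂ : PreservesFiniteColimits R.iShriek) :
    ∀ Y : ℬ, ∃ w : R.adj₂.counit.app Y ≫ R.adj₄.unit.app Y = 0,
      (ShortComplex.mk (R.adj₂.counit.app Y) (R.adj₄.unit.app Y) w).ShortExact :=
  stmt9_general 𝒜 ℬ 𝒞 R h₂
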